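/- arXiv:2310.09844 — 3 statements merged into one kernel-verified Lean document; each statement's English description precedes it below -/
import Mathlib

section
/- Solution recovery, part (b). Suppose each of the risk measures ℛ₁,...,ℛ_q is the worst-case risk measure, ℛ₀ is the expectation risk measure, and there exists (F̄,Ḡ) ∈ ℱ × 𝒢 such that for every ω ∈ Ω one has Ḡ(ξ(ω)) ∈ D_ε(δ) and (F̄(ξ(ω)), ℍ(Ḡ(ξ(ω)))) is a minimizer of the actual problem (AP)(ξ(ω)). If (F*,G*) is a minimizer of the training problem (TP), then for each ω ∈ Ω the point (F*(ξ(ω)), ℍ(G*(ξ(ω)))) is a minimizer of (AP)(ξ(ω)). -/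
open Filter Finset

noncomputable def Heav {s : ℕ} (v : EuclideanSpace ℝ (Fin s)) : EuclideanSpace ℝ (Fin s) :=
  WithLp.toLp 2 (fun i => if v i ≤ 0 then 0 else 1)

/-- The set `D_ε(δ) = ([−δ,−ε] ∪ [ε,δ])^m`, with `δ` possibly infinite. -/
def Dset (m : ℕ) (ε : ℝ) (δ : EReal) : Set (EuclideanSpace ℝ (Fin m)) :=
  {g | ∀ i, ε ≤ |g i| ∧ ((|g i| : ℝ) : EReal) ≤ δ}

/-!
Worst-case constraints hold in the risk sense exactly when they hold at every scenario, so
`(F̄, Ḡ)` is feasible for the training problem and `(F⋆, G⋆)` is feasible for every actual problem.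
Hence the objective of `(F⋆, G⋆)` is pointwise at least that of `(F̄, Ḡ)`, while its expectation is
at most that of `(F̄, Ḡ)`; with strictly positive probabilities the two objectives agree at every
scenario, so `(F⋆, G⋆)` attains the optimal value of each actual problem.
-/

section Recovery

variable {q : ℕ} {S X Y : Type*}

def IsConstrainedMinimizer (ψ : Fin (q + 1) → S → X → Y → ℝ) (C : Set (X × Y)) (s : S)
    (x : X) (y : Y) : Prop :=
  ((x, y) ∈ C ∧ ∀ k : Fin q, ψ k.succ s x y ≤ 0) ∧
    ∀ x' y', (x', y') ∈ C → (∀ k : Fin q, ψ k.succ s x' y' ≤ 0) → ψ 0 s x y ≤ ψ 0 s x' y'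

theorem IsConstrainedMinimizer.of_le {ψ : Fin (q + 1) → S → X → Y → ℝ} {C : Set (X × Y)} {s : S}
    {x₀ x : X} {y₀ y : Y} (hmin : IsConstrainedMinimizer ψ C s x₀ y₀) (hC : (x, y) ∈ C)
    (hfeas : ∀ k : Fin q, ψ k.succ s x y ≤ 0) (hle : ψ 0 s x y ≤ ψ 0 s x₀ y₀) :
    IsConstrainedMinimizer ψ C s x y :=
  ⟨⟨hC, hfeas⟩, fun x' y' hC' hfeas' => hle.trans (hmin.2 x' y' hC' hfeas')⟩

end Recovery

theorem Real.iSup_nonpos_iff_of_finite {ι : Type*} [Finite ι] {f : ι → ℝ} :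
    ⨆ i, f i ≤ 0 ↔ ∀ i, f i ≤ 0 :=
  ⟨fun h i => (le_ciSup (Set.finite_range f).bddAbove i).trans h, Real.iSup_nonpos⟩

theorem eq_of_le_of_sum_mul_le {ι : Type*} [Fintype ι] {w f g : ι → ℝ} (hw : ∀ i, 0 < w i)
    (hle : ∀ i, f i ≤ g i) (hsum : ∑ i, w i * g i ≤ ∑ i, w i * f i) (i : ι) : f i = g i := by
  have hle' : ∀ i ∈ univ, w i * f i ≤ w i * g i := fun i _ =>
    mul_le_mul_of_nonneg_left (hle i) (hw i).le
  have heq := (sum_eq_sum_iff_of_le hle').mp ((sum_le_sum hle').antisymm hsum) i (mem_univ i)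
  exact mul_left_cancel₀ (hw i).ne' heq

theorem solution_recovery_b_general
    {r n m q : ℕ} {Ω : Type} [Fintype Ω]
    (P : Ω → ℝ) (hP : ∀ ω, 0 < P ω)
    (ψ : Fin (q + 1) → EuclideanSpace ℝ (Fin r) → EuclideanSpace ℝ (Fin n) →
      EuclideanSpace ℝ (Fin m) → ℝ)
    (C : Set (EuclideanSpace ℝ (Fin n) × EuclideanSpace ℝ (Fin m)))
    (ℱ : Set (EuclideanSpace ℝ (Fin r) → EuclideanSpace ℝ (Fin n)))
    (𝒢 : Set (EuclideanSpace ℝ (Fin r) → EuclideanSpace ℝ (Fin m)))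
    (ξ : Ω → EuclideanSpace ℝ (Fin r))
    (R : Fin (q + 1) → (Ω → ℝ) → ℝ)
    (hR0exp : R 0 = fun η => ∑ ω, P ω * η ω)
    (hRworst : ∀ k : Fin q, R k.succ = fun η => ⨆ ω, η ω)
    (ε : ℝ) (δ : EReal)
    (Fb : EuclideanSpace ℝ (Fin r) → EuclideanSpace ℝ (Fin n))
    (Gb : EuclideanSpace ℝ (Fin r) → EuclideanSpace ℝ (Fin m))
    (hFb : Fb ∈ ℱ) (hGb : Gb ∈ 𝒢)
    (hD : ∀ ω, Gb (ξ ω) ∈ Dset m ε δ)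
    (hAPmin : ∀ ω,
      ((Fb (ξ ω), Heav (Gb (ξ ω))) ∈ C ∧
        (∀ k : Fin q, ψ k.succ (ξ ω) (Fb (ξ ω)) (Heav (Gb (ξ ω))) ≤ 0)) ∧
      (∀ x y, (x, y) ∈ C → (∀ k : Fin q, ψ k.succ (ξ ω) x y ≤ 0) →
        ψ 0 (ξ ω) (Fb (ξ ω)) (Heav (Gb (ξ ω))) ≤ ψ 0 (ξ ω) x y))
    (Fstar : EuclideanSpace ℝ (Fin r) → EuclideanSpace ℝ (Fin n))
    (Gstar : EuclideanSpace ℝ (Fin r) → EuclideanSpace ℝ (Fin m))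
    (hstarRisk : ∀ k : Fin q,
      R k.succ (fun ω => ψ k.succ (ξ ω) (Fstar (ξ ω)) (Heav (Gstar (ξ ω)))) ≤ 0)
    (hstarC : ∀ ω, (Fstar (ξ ω), Heav (Gstar (ξ ω))) ∈ C)
    (hstarOpt : ∀ F ∈ ℱ, ∀ G ∈ 𝒢,
      (∀ k : Fin q,
        R k.succ (fun ω => ψ k.succ (ξ ω) (F (ξ ω)) (Heav (G (ξ ω)))) ≤ 0) →
      (∀ ω, (F (ξ ω), Heav (G (ξ ω))) ∈ C) →
      (∀ ω, G (ξ ω) ∈ Dset m ε δ) →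
      R 0 (fun ω => ψ 0 (ξ ω) (Fstar (ξ ω)) (Heav (Gstar (ξ ω)))) ≤
        R 0 (fun ω => ψ 0 (ξ ω) (F (ξ ω)) (Heav (G (ξ ω))))) :
    ∀ ω,
      ((Fstar (ξ ω), Heav (Gstar (ξ ω))) ∈ C ∧
        (∀ k : Fin q, ψ k.succ (ξ ω) (Fstar (ξ ω)) (Heav (Gstar (ξ ω))) ≤ 0)) ∧
      (∀ x y, (x, y) ∈ C → (∀ k : Fin q, ψ k.succ (ξ ω) x y ≤ 0) →
        ψ 0 (ξ ω) (Fstar (ξ ω)) (Heav (Gstar (ξ ω))) ≤ ψ 0 (ξ ω) x y) := by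
  have hworst : ∀ (F : EuclideanSpace ℝ (Fin r) → EuclideanSpace ℝ (Fin n))
      (G : EuclideanSpace ℝ (Fin r) → EuclideanSpace ℝ (Fin m)) (k : Fin q),
      R k.succ (fun ω => ψ k.succ (ξ ω) (F (ξ ω)) (Heav (G (ξ ω)))) ≤ 0 ↔
        ∀ ω, ψ k.succ (ξ ω) (F (ξ ω)) (Heav (G (ξ ω))) ≤ 0 := fun F G k => by
    rw [hRworst k]
    exact Real.iSup_nonpos_iff_of_finite
  have hstarFeas ω k := (hworst Fstar Gstar k).mp (hstarRisk k) ω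
  have hbarRisk k := (hworst Fb Gb k).mpr fun ω => (hAPmin ω).1.2 k
  have hbarLe ω := (hAPmin ω).2 _ _ (hstarC ω) (hstarFeas ω)
  have hexp := hstarOpt Fb hFb Gb hGb hbarRisk (fun ω => (hAPmin ω).1.1) hD
  rw [hR0exp] at hexp
  intro ω
  exact IsConstrainedMinimizer.of_le (hAPmin ω) (hstarC ω) (hstarFeas ω)
    (eq_of_le_of_sum_mul_le hP hbarLe hexp ω).ge

/-- Solution recovery, part (b).  If `ℛ₁,…,ℛ_q` are worst-case risk measures,
`ℛ₀` is the expectation, `(F̄,Ḡ) ∈ ℱ × 𝒢` tracks minimizers of `(AP)(ξω)` with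
`Ḡ(ξω) ∈ D_ε(δ)`, and `(F⋆,G⋆)` is a minimizer of `(TP)`, then for every `ω` the pair
`(F⋆(ξω), ℍ(G⋆(ξω)))` is a minimizer of `(AP)(ξω)`. -/
theorem solution_recovery_b
    {r n m q : ℕ} {Ω : Type} [Fintype Ω] [Nonempty Ω]
    (P : Ω → ℝ) (hP : ∀ ω, 0 < P ω) (hPsum : ∑ ω, P ω = 1)
    (ψ : Fin (q + 1) → EuclideanSpace ℝ (Fin r) → EuclideanSpace ℝ (Fin n) →
      EuclideanSpace ℝ (Fin m) → ℝ)
    (hψcont : ∀ k, Continuous fun p : EuclideanSpace ℝ (Fin r) × EuclideanSpace ℝ (Fin n) ×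
      EuclideanSpace ℝ (Fin m) => ψ k p.1 p.2.1 p.2.2)
    (C : Set (EuclideanSpace ℝ (Fin n) × EuclideanSpace ℝ (Fin m)))
    (hCne : C.Nonempty) (hCcl : IsClosed C)
    (hCbin : ∀ p ∈ C, ∀ i, p.2 i = 0 ∨ p.2 i = 1)
    (ℱ : Set (EuclideanSpace ℝ (Fin r) → EuclideanSpace ℝ (Fin n)))
    (𝒢 : Set (EuclideanSpace ℝ (Fin r) → EuclideanSpace ℝ (Fin m)))
    (hℱcont : ∀ F ∈ ℱ, Continuous F) (h𝒢cont : ∀ G ∈ 𝒢, Continuous G)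
    (ξ : Ω → EuclideanSpace ℝ (Fin r))
    (R : Fin (q + 1) → (Ω → ℝ) → ℝ)
    (hRconst : ∀ k (c : ℝ), R k (fun _ => c) = c)
    (hR0exp : R 0 = fun η => ∑ ω, P ω * η ω)
    (hRworst : ∀ k : Fin q, R k.succ = fun η => ⨆ ω, η ω)
    (ε : ℝ) (hε : 0 < ε) (δ : EReal) (hδ : (ε : EReal) < δ)
    (Fb : EuclideanSpace ℝ (Fin r) → EuclideanSpace ℝ (Fin n))
    (Gb : EuclideanSpace ℝ (Fin r) → EuclideanSpace ℝ (Fin m))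
    (hFb : Fb ∈ ℱ) (hGb : Gb ∈ 𝒢)
    (hD : ∀ ω, Gb (ξ ω) ∈ Dset m ε δ)
    (hAPmin : ∀ ω,
      ((Fb (ξ ω), Heav (Gb (ξ ω))) ∈ C ∧
        (∀ k : Fin q, ψ k.succ (ξ ω) (Fb (ξ ω)) (Heav (Gb (ξ ω))) ≤ 0)) ∧
      (∀ x y, (x, y) ∈ C → (∀ k : Fin q, ψ k.succ (ξ ω) x y ≤ 0) →
        ψ 0 (ξ ω) (Fb (ξ ω)) (Heav (Gb (ξ ω))) ≤ ψ 0 (ξ ω) x y))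
    (Fstar : EuclideanSpace ℝ (Fin r) → EuclideanSpace ℝ (Fin n))
    (Gstar : EuclideanSpace ℝ (Fin r) → EuclideanSpace ℝ (Fin m))
    (hstarFmem : Fstar ∈ ℱ) (hstarGmem : Gstar ∈ 𝒢)
    (hstarRisk : ∀ k : Fin q,
      R k.succ (fun ω => ψ k.succ (ξ ω) (Fstar (ξ ω)) (Heav (Gstar (ξ ω)))) ≤ 0)
    (hstarC : ∀ ω, (Fstar (ξ ω), Heav (Gstar (ξ ω))) ∈ C)
    (hstarD : ∀ ω, Gstar (ξ ω) ∈ Dset m ε δ)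
    (hstarOpt : ∀ F ∈ ℱ, ∀ G ∈ 𝒢,
      (∀ k : Fin q,
        R k.succ (fun ω => ψ k.succ (ξ ω) (F (ξ ω)) (Heav (G (ξ ω)))) ≤ 0) →
      (∀ ω, (F (ξ ω), Heav (G (ξ ω))) ∈ C) →
      (∀ ω, G (ξ ω) ∈ Dset m ε δ) →
      R 0 (fun ω => ψ 0 (ξ ω) (Fstar (ξ ω)) (Heav (Gstar (ξ ω)))) ≤
        R 0 (fun ω => ψ 0 (ξ ω) (F (ξ ω)) (Heav (G (ξ ω))))) :
    ∀ ω,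
      ((Fstar (ξ ω), Heav (Gstar (ξ ω))) ∈ C ∧
        (∀ k : Fin q, ψ k.succ (ξ ω) (Fstar (ξ ω)) (Heav (Gstar (ξ ω))) ≤ 0)) ∧
      (∀ x y, (x, y) ∈ C → (∀ k : Fin q, ψ k.succ (ξ ω) x y ≤ 0) →
        ψ 0 (ξ ω) (Fstar (ξ ω)) (Heav (Gstar (ξ ω))) ≤ ψ 0 (ξ ω) x y) :=
  solution_recovery_b_general P hP ψ C ℱ 𝒢 ξ R hR0exp hRworst ε δ Fb Gb hFb hGb hD hAPmin Fstar
    Gstar hstarRisk hstarC hstarOpt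
end

section
/- Limiting bound. Suppose δ^ν ∈ (ε,∞] → δ ∈ (ε,∞] and ξ^ν → ξ̄ pointwise, where ξ̄ is the constant random vector with value ξ̄ ∈ Ξ, and assume: (a) the risk measures ℛ₀,ℛ₁,...,ℛ_q are real-valued and continuous; (b) for every k = 0,1,...,q, ξ ∈ Ξ and (x,y) ∈ C, one has ψ_k^ν(ζ^ν,x^ν,y) → ψ_k(ξ,x,y) whenever ζ^ν ∈ Ξ → ξ and (x^ν,y) ∈ C → (x,y); (c) there exists h : ℱ × 𝒢 → [0,∞) with liminf h^ν(F^ν,G^ν) ≥ h(F,G) whenever (F^ν,G^ν) → (F,G) uniformly; (d) for each ν, (F̂^ν,Ĝ^ν) is feasible for (TP)^ν and ℛ₀(ω ↦ ψ₀^ν(ξ^ν(ω), F̂^ν(ξ^ν(ω)), ℍ(Ĝ^ν(ξ^ν(ω))))) + h^ν(F̂^ν,Ĝ^ν) ≤ γ^ν. If there is a subsequence N ⊂ ℕ such that (F̂^ν,Ĝ^ν) → (F*,G*) uniformly along N and liminf_{ν∈N} γ^ν < ∞, then: (F*(ξ̄), ℍ(G*(ξ̄))) is feasible for (AP)(ξ̄);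 ℍ(Ĝ^ν(ξ^ν(ω))) = ℍ(G*(ξ̄)) for all ω ∈ Ω when ν ∈ N is sufficiently large; G*(ξ̄) ∈ D_ε(δ); and ψ₀(ξ̄, F*(ξ̄), ℍ(G*(ξ̄))) + h(F*,G*) ≤ liminf_{ν∈N} γ^ν. -/
/-
Along the subsequence, `ξ^ν(ω) → ξ̄` and the uniform convergence of the decision rules give
`Ĝ^ν(ξ^ν(ω)) → G⋆(ξ̄)` and `F̂^ν(ξ^ν(ω)) → F⋆(ξ̄)`. The constraint `Ĝ^ν(ξ^ν(ω)) ∈ D_ε(δ^ν)` is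
closed in the limit, so every coordinate of `G⋆(ξ̄)` has modulus at least `ε > 0`; the
Heaviside function is locally constant there, so the binary prescriptions are eventually frozen
at `ℍ(G⋆(ξ̄))`. With the binary part fixed, assumption (b) and the continuity of the risk
measures pass the constraints and the objective to the limit, closedness of `C` gives
feasibility, and (c) bounds the regularizer. Assumptions (b) and (c) speak about whole
sequences; they are transferred to the subsequence by filling the missing indices with the
limit itself.
-/

open Filter Finset

open Topology Function

section Extend

variable {α : Type*} {N : ℕ → ℕ}

theorem Function.extend_apply_mem {f : ℕ → α} {g : ℕ → α} {s : Set α}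
    (hf : ∀ j, f j ∈ s) (hg : ∀ n, g n ∈ s) (n : ℕ) : extend N f g n ∈ s := by
  rcases Set.range_extend_subset N f g ⟨n, rfl⟩ with ⟨j, hj⟩ | ⟨k, -, hk⟩
  · exact hj ▸ hf j
  · exact hk ▸ hg k

theorem StrictMono.eventually_extend (hN : StrictMono N) {f g : ℕ → α} {p : α → Prop}
    (hf : ∀ᶠ j in atTop, p (f j)) (hg : ∀ᶠ n in atTop, p (g n)) :
    ∀ᶠ n in atTop, p (extend N f g n) := by
  obtain ⟨A, hA⟩ := eventually_atTop.1 hf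
  obtain ⟨B, hB⟩ := eventually_atTop.1 hg
  refine eventually_atTop.2 ⟨max (N A) B, fun n hn => ?_⟩
  by_cases hrange : ∃ j, N j = n
  · obtain ⟨j, rfl⟩ := hrange
    rw [hN.injective.extend_apply]
    exact hA j (hN.le_iff_le.1 (le_of_max_le_left hn))
  · rw [extend_apply' _ _ _ hrange]
    exact hB n (le_of_max_le_right hn)

theorem StrictMono.tendsto_extend (hN : StrictMono N) {f g : ℕ → α} {l : Filter α}
    (hf : Tendsto f atTop l) (hg : Tendsto g atTop l) : Tendsto (extend N f g) atTop l :=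
  fun _ hs => hN.eventually_extend (hf hs) (hg hs)

theorem StrictMono.tendstoUniformlyOn_extend {β γ : Type*} [UniformSpace γ] (hN : StrictMono N)
    {Fs : ℕ → β → γ} {F : β → γ} {s : Set β} (h : TendstoUniformlyOn Fs F atTop s) :
    TendstoUniformlyOn (extend N Fs fun _ => F) F atTop s :=
  fun u hu => hN.eventually_extend (p := fun G : β → γ => ∀ x ∈ s, (F x, G x) ∈ u) (h u hu)
    (.of_forall fun _ _ _ => refl_mem_uniformity hu)

end Extend

section SequentialLimits

variable {Z X Y : Type*} [TopologicalSpace Z] [TopologicalSpace X] {N : ℕ → ℕ}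

/-- Assumption (b) of the theorem, for a single index `k`. -/
def ApproximatesOn (φs : ℕ → Z → X → Y → ℝ) (φ : Z → X → Y → ℝ) (Ξ : Set Z) (C : Set (X × Y)) :
    Prop :=
  ∀ ξ ∈ Ξ, ∀ x y, (x, y) ∈ C → ∀ (ζ : ℕ → Z) (xs : ℕ → X), (∀ ν, ζ ν ∈ Ξ) →
    (∀ ν, (xs ν, y) ∈ C) → Tendsto ζ atTop (𝓝 ξ) → Tendsto xs atTop (𝓝 x) →
    Tendsto (fun ν => φs ν (ζ ν) (xs ν) y) atTop (𝓝 (φ ξ x y))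

namespace ApproximatesOn

variable {φs : ℕ → Z → X → Y → ℝ} {φ : Z → X → Y → ℝ} {Ξ : Set Z} {C : Set (X × Y)}

theorem comp_strictMono (hφ : ApproximatesOn φs φ Ξ C) (hN : StrictMono N) :
    ApproximatesOn (fun j => φs (N j)) φ Ξ C := by
  intro ξ hξ x y hxy ζ xs hζ hxs hζlim hxslim
  have hfull := hφ ξ hξ x y hxy (extend N ζ fun _ => ξ) (extend N xs fun _ => x)
    (extend_apply_mem hζ fun _ => hξ) (extend_apply_mem (s := {x' | (x', y) ∈ C}) hxs fun _ => hxy)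
    (hN.tendsto_extend hζlim tendsto_const_nhds) (hN.tendsto_extend hxslim tendsto_const_nhds)
  simpa only [comp_def, hN.injective.extend_apply] using hfull.comp hN.tendsto_atTop

theorem tendsto_comp_strictMono (hφ : ApproximatesOn φs φ Ξ C) (hN : StrictMono N) {ξ : Z}
    (hξ : ξ ∈ Ξ) {x : X} {y : Y} (hxy : (x, y) ∈ C) {ζ : ℕ → Z} {xs : ℕ → X}
    (hmem : ∀ᶠ j in atTop, ζ j ∈ Ξ ∧ (xs j, y) ∈ C) (hζ : Tendsto ζ atTop (𝓝 ξ))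
    (hxs : Tendsto xs atTop (𝓝 x)) :
    Tendsto (fun j => φs (N j) (ζ j) (xs j) y) atTop (𝓝 (φ ξ x y)) := by
  obtain ⟨J, hJ⟩ := eventually_atTop.1 hmem
  rw [← tendsto_add_atTop_iff_nat J]
  exact hφ.comp_strictMono (hN.comp (strictMono_id.add_const J)) ξ hξ x y hxy _ _
    (fun j => (hJ _ (Nat.le_add_left J j)).1) (fun j => (hJ _ (Nat.le_add_left J j)).2)
    ((tendsto_add_atTop_iff_nat J).2 hζ) ((tendsto_add_atTop_iff_nat J).2 hxs)

end ApproximatesOn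

end SequentialLimits

/-- Assumption (c) of the theorem. -/
def IsLiminfLowerBoundOn {β γ δ : Type*} [UniformSpace γ] [UniformSpace δ]
    (hs : ℕ → (β → γ) → (β → δ) → ℝ) (h : (β → γ) → (β → δ) → ℝ) (Ξ : Set β) : Prop :=
  ∀ (Fs : ℕ → β → γ) (Gs : ℕ → β → δ) (F : β → γ) (G : β → δ),
    TendstoUniformlyOn Fs F atTop Ξ → TendstoUniformlyOn Gs G atTop Ξ →
    ((h F G : ℝ) : EReal) ≤ atTop.liminf fun ν => ((hs ν (Fs ν) (Gs ν) : ℝ) : EReal)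

theorem IsLiminfLowerBoundOn.comp_strictMono {β γ δ : Type*} [UniformSpace γ] [UniformSpace δ]
    {hs : ℕ → (β → γ) → (β → δ) → ℝ} {h : (β → γ) → (β → δ) → ℝ} {Ξ : Set β}
    (hh : IsLiminfLowerBoundOn hs h Ξ) {N : ℕ → ℕ} (hN : StrictMono N) :
    IsLiminfLowerBoundOn (fun j => hs (N j)) h Ξ := by
  intro Fs Gs F G hF hG
  set u : ℕ → EReal := fun n => hs n (extend N Fs (fun _ => F) n) (extend N Gs (fun _ => G) n)
  calc ((h F G : ℝ) : EReal) ≤ atTop.liminf u :=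
        hh _ _ F G (hN.tendstoUniformlyOn_extend hF) (hN.tendstoUniformlyOn_extend hG)
    _ ≤ atTop.liminf (u ∘ N) := hN.tendsto_atTop.liminf_le_liminf_comp
    _ = atTop.liminf fun j => ((hs (N j) (Fs j) (Gs j) : ℝ) : EReal) := by
        simp only [u, comp_def, hN.injective.extend_apply]

theorem le_liminf_add_of_tendsto {ι : Type*} {l : Filter ι} [l.NeBot] {a b : ℝ} {u v w : ι → ℝ}
    (hu : Tendsto u l (𝓝 a)) (hv : (b : EReal) ≤ l.liminf fun i => (v i : EReal))
    (hw : ∀ i, u i + v i ≤ w i) : ((a + b : ℝ) : EReal) ≤ l.liminf fun i => (w i : EReal) :=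
  calc ((a + b : ℝ) : EReal) = a + b := EReal.coe_add a b
    _ ≤ (l.liminf fun i => (u i : EReal)) + l.liminf fun i => (v i : EReal) :=
        add_le_add ((continuous_coe_real_ereal.tendsto a).comp hu).liminf_eq.ge hv
    _ ≤ l.liminf fun i => ((u i + v i : ℝ) : EReal) := by
        simpa only [EReal.coe_add, Pi.add_def] using EReal.le_liminf_add
    _ ≤ l.liminf fun i => (w i : EReal) :=
        liminf_le_liminf (.of_forall fun i => EReal.coe_le_coe_iff.2 (hw i))

theorem mem_dset_of_tendsto {ι : Type*} {l : Filter ι} [l.NeBot] {m : ℕ} {ε : ℝ}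
    {δ : EReal} {δs : ι → EReal} {g : EuclideanSpace ℝ (Fin m)}
    {gs : ι → EuclideanSpace ℝ (Fin m)} (hg : Tendsto gs l (𝓝 g)) (hδ : Tendsto δs l (𝓝 δ))
    (hmem : ∀ᶠ i in l, gs i ∈ Dset m ε (δs i)) : g ∈ Dset m ε δ := by
  intro k
  have hk : Tendsto (fun i => |gs i k|) l (𝓝 |g k|) :=
    ((continuous_abs.comp (PiLp.continuous_apply 2 _ k)).tendsto g).comp hg
  exact ⟨ge_of_tendsto hk (hmem.mono fun i hi => (hi k).1),
    le_of_tendsto_of_tendsto ((continuous_coe_real_ereal.tendsto _).comp hk) hδ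
      (hmem.mono fun i hi => (hi k).2)⟩

theorem heav_eventually_eq {s : ℕ} {v : EuclideanSpace ℝ (Fin s)} (hv : ∀ i, v i ≠ 0) :
    ∀ᶠ w in 𝓝 v, Heav w = Heav v := by
  have hsign : ∀ i, ∀ᶠ w in 𝓝 v, (w i ≤ 0 ↔ v i ≤ 0) := by
    intro i
    have hi : Tendsto (fun w : EuclideanSpace ℝ (Fin s) => w i) (𝓝 v) (𝓝 (v i)) :=
      (PiLp.continuous_apply 2 _ i).tendsto v
    rcases (hv i).lt_or_gt with hneg | hpos
    · filter_upwards [hi.eventually_lt_const hneg] with w hw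
      exact iff_of_true hw.le hneg.le
    · filter_upwards [hi.eventually_const_lt hpos] with w hw
      exact iff_of_false hw.not_ge hpos.not_ge
  filter_upwards [eventually_all.2 hsign] with w hw
  ext i
  simp only [Heav, hw i]

theorem limiting_bound_general
    {r n m q : ℕ} {Ω : Type} [Fintype Ω] [Nonempty Ω]
    (ψ : Fin (q + 1) → EuclideanSpace ℝ (Fin r) → EuclideanSpace ℝ (Fin n) →
      EuclideanSpace ℝ (Fin m) → ℝ)
    (ψs : ℕ → Fin (q + 1) → EuclideanSpace ℝ (Fin r) → EuclideanSpace ℝ (Fin n) →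
      EuclideanSpace ℝ (Fin m) → ℝ)
    (C : Set (EuclideanSpace ℝ (Fin n) × EuclideanSpace ℝ (Fin m)))
    (hCcl : IsClosed C)
    (Ξ : Set (EuclideanSpace ℝ (Fin r)))
    (ξbar : EuclideanSpace ℝ (Fin r)) (hξbar : ξbar ∈ Ξ)
    (ξs : ℕ → Ω → EuclideanSpace ℝ (Fin r)) (hξsΞ : ∀ ν ω, ξs ν ω ∈ Ξ)
    (hξsconv : ∀ ω, Tendsto (fun ν => ξs ν ω) atTop (nhds ξbar))
    (ℱ : Set (EuclideanSpace ℝ (Fin r) → EuclideanSpace ℝ (Fin n)))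
    (𝒢 : Set (EuclideanSpace ℝ (Fin r) → EuclideanSpace ℝ (Fin m)))
    (hℱcont : ∀ F ∈ ℱ, ContinuousOn F Ξ) (h𝒢cont : ∀ G ∈ 𝒢, ContinuousOn G Ξ)
    -- (a) risk measures: real-valued and continuous
    (R : Fin (q + 1) → (Ω → ℝ) → ℝ)
    (hRconst : ∀ k (c : ℝ), R k (fun _ => c) = c)
    (hRcont : ∀ k (η : Ω → ℝ) (ηs : ℕ → Ω → ℝ),
      (∀ ω, Tendsto (fun ν => ηs ν ω) atTop (nhds (η ω))) →
      Tendsto (fun ν => R k (ηs ν)) atTop (nhds (R k η)))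
    (ε : ℝ) (hε : 0 < ε)
    (δ : EReal)
    (δs : ℕ → EReal)
    (hδsconv : Tendsto δs atTop (nhds δ))
    -- (b) approximating functions converge
    (hψapprox : ∀ (k : Fin (q + 1)) (ξ : EuclideanSpace ℝ (Fin r)), ξ ∈ Ξ →
      ∀ x y, (x, y) ∈ C →
      ∀ (ζ : ℕ → EuclideanSpace ℝ (Fin r)) (xs : ℕ → EuclideanSpace ℝ (Fin n)),
        (∀ ν, ζ ν ∈ Ξ) → (∀ ν, (xs ν, y) ∈ C) →
        Tendsto ζ atTop (nhds ξ) → Tendsto xs atTop (nhds x) →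
        Tendsto (fun ν => ψs ν k (ζ ν) (xs ν) y) atTop (nhds (ψ k ξ x y)))
    -- (c) regularizers and their liminf-limit
    (hs : ℕ → (EuclideanSpace ℝ (Fin r) → EuclideanSpace ℝ (Fin n)) →
      (EuclideanSpace ℝ (Fin r) → EuclideanSpace ℝ (Fin m)) → ℝ)
    (h : (EuclideanSpace ℝ (Fin r) → EuclideanSpace ℝ (Fin n)) →
      (EuclideanSpace ℝ (Fin r) → EuclideanSpace ℝ (Fin m)) → ℝ)
    (hh_liminf : ∀ (Fseq : ℕ → EuclideanSpace ℝ (Fin r) → EuclideanSpace ℝ (Fin n))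
      (Gseq : ℕ → EuclideanSpace ℝ (Fin r) → EuclideanSpace ℝ (Fin m))
      (F : EuclideanSpace ℝ (Fin r) → EuclideanSpace ℝ (Fin n))
      (G : EuclideanSpace ℝ (Fin r) → EuclideanSpace ℝ (Fin m)),
      TendstoUniformlyOn Fseq F atTop Ξ → TendstoUniformlyOn Gseq G atTop Ξ →
      ((h F G : ℝ) : EReal) ≤ atTop.liminf fun ν => ((hs ν (Fseq ν) (Gseq ν) : ℝ) : EReal))
    -- (d) (F̂^ν, Ĝ^ν) feasible for (TP)^ν with objective value at most γ^ν
    (Fhat : ℕ → EuclideanSpace ℝ (Fin r) → EuclideanSpace ℝ (Fin n))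
    (Ghat : ℕ → EuclideanSpace ℝ (Fin r) → EuclideanSpace ℝ (Fin m))
    (hhatfeas : ∀ ν, Fhat ν ∈ ℱ ∧ Ghat ν ∈ 𝒢 ∧
      (∀ k : Fin q, R k.succ (fun ω => ψs ν k.succ (ξs ν ω) (Fhat ν (ξs ν ω))
        (Heav (Ghat ν (ξs ν ω)))) ≤ 0) ∧
      (∀ ω, (Fhat ν (ξs ν ω), Heav (Ghat ν (ξs ν ω))) ∈ C) ∧
      (∀ ω, Ghat ν (ξs ν ω) ∈ Dset m ε (δs ν)))
    (γ : ℕ → ℝ)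
    (hγ : ∀ ν, R 0 (fun ω => ψs ν 0 (ξs ν ω) (Fhat ν (ξs ν ω))
      (Heav (Ghat ν (ξs ν ω)))) + hs ν (Fhat ν) (Ghat ν) ≤ γ ν)
    -- the subsequence and its uniform limit
    (N : ℕ → ℕ) (hN : StrictMono N)
    (Fstar : EuclideanSpace ℝ (Fin r) → EuclideanSpace ℝ (Fin n))
    (Gstar : EuclideanSpace ℝ (Fin r) → EuclideanSpace ℝ (Fin m))
    (hFstar : Fstar ∈ ℱ) (hGstar : Gstar ∈ 𝒢)
    (hFconv : TendstoUniformlyOn (fun j => Fhat (N j)) Fstar atTop Ξ)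
    (hGconv : TendstoUniformlyOn (fun j => Ghat (N j)) Gstar atTop Ξ) :
    ((Fstar ξbar, Heav (Gstar ξbar)) ∈ C ∧
      (∀ k : Fin q, ψ k.succ ξbar (Fstar ξbar) (Heav (Gstar ξbar)) ≤ 0)) ∧
    (∃ J, ∀ j ≥ J, ∀ ω, Heav (Ghat (N j) (ξs (N j) ω)) = Heav (Gstar ξbar)) ∧
    Gstar ξbar ∈ Dset m ε δ ∧
    ((ψ 0 ξbar (Fstar ξbar) (Heav (Gstar ξbar)) + h Fstar Gstar : ℝ) : EReal) ≤
      atTop.liminf fun j => ((γ (N j) : ℝ) : EReal) := by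
  obtain ⟨ω₀⟩ := ‹Nonempty Ω›
  have hξN : ∀ ω, Tendsto (fun j => ξs (N j) ω) atTop (𝓝[Ξ] ξbar) := fun ω =>
    tendsto_nhdsWithin_iff.2 ⟨(hξsconv ω).comp hN.tendsto_atTop, .of_forall fun _ => hξsΞ _ ω⟩
  have hF : ∀ ω, Tendsto (fun j => Fhat (N j) (ξs (N j) ω)) atTop (𝓝 (Fstar ξbar)) :=
    fun ω => hFconv.tendsto_comp (hℱcont Fstar hFstar ξbar hξbar) (hξN ω)
  have hG : ∀ ω, Tendsto (fun j => Ghat (N j) (ξs (N j) ω)) atTop (𝓝 (Gstar ξbar)) :=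
    fun ω => hGconv.tendsto_comp (h𝒢cont Gstar hGstar ξbar hξbar) (hξN ω)
  have hD : Gstar ξbar ∈ Dset m ε δ := mem_dset_of_tendsto (hG ω₀)
    (hδsconv.comp hN.tendsto_atTop) (.of_forall fun j => (hhatfeas (N j)).2.2.2.2 ω₀)
  have hHeav : ∀ᶠ j in atTop, ∀ ω, Heav (Ghat (N j) (ξs (N j) ω)) = Heav (Gstar ξbar) :=
    eventually_all.2 fun ω => (hG ω).eventually
      (heav_eventually_eq fun i => abs_pos.1 (hε.trans_le (hD i).1))
  have hC : ∀ᶠ j in atTop, ∀ ω, (Fhat (N j) (ξs (N j) ω), Heav (Gstar ξbar)) ∈ C :=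
    hHeav.mono fun j hj ω => hj ω ▸ (hhatfeas (N j)).2.2.2.1 ω
  have hC₀ : (Fstar ξbar, Heav (Gstar ξbar)) ∈ C :=
    hCcl.mem_of_tendsto ((hF ω₀).prodMk_nhds tendsto_const_nhds) (hC.mono fun _ hj => hj ω₀)
  have hrisk : ∀ k, Tendsto (fun j => R k fun ω => ψs (N j) k (ξs (N j) ω)
      (Fhat (N j) (ξs (N j) ω)) (Heav (Ghat (N j) (ξs (N j) ω)))) atTop
      (𝓝 (ψ k ξbar (Fstar ξbar) (Heav (Gstar ξbar)))) := by
    intro k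
    rw [← hRconst k (ψ k ξbar (Fstar ξbar) (Heav (Gstar ξbar)))]
    refine hRcont k _ _ fun ω => ?_
    refine (ApproximatesOn.tendsto_comp_strictMono (hψapprox k) hN hξbar hC₀
      (hC.mono fun j hj => ⟨hξsΞ _ ω, hj ω⟩) ((hξsconv ω).comp hN.tendsto_atTop) (hF ω)).congr' ?_
    filter_upwards [hHeav] with j hj
    rw [hj ω]
  refine ⟨⟨hC₀, fun k => le_of_tendsto (hrisk k.succ)
    (.of_forall fun j => (hhatfeas (N j)).2.2.1 k)⟩, eventually_atTop.1 hHeav, hD, ?_⟩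
  exact le_liminf_add_of_tendsto (hrisk 0)
    (IsLiminfLowerBoundOn.comp_strictMono hh_liminf hN _ _ _ _ hFconv hGconv) fun j => hγ (N j)

/-- Limiting bound.  Any feasible decision rules of `(TP)^ν` whose objective
values are bounded by `γ^ν`, converging uniformly on `Ξ` along a subsequence with
`liminf γ^ν < ∞`, have a limit `(F⋆,G⋆)` that is feasible for `(AP)(ξ̄)`, whose binary
prescriptions eventually coincide with `ℍ(G⋆(ξ̄))`, with `G⋆(ξ̄) ∈ D_ε(δ)` and
`ψ₀(ξ̄,F⋆(ξ̄),ℍ(G⋆(ξ̄))) + h(F⋆,G⋆) ≤ liminf γ^ν`. -/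
theorem limiting_bound
    {r n m q : ℕ} {Ω : Type} [Fintype Ω] [Nonempty Ω]
    (P : Ω → ℝ) (hP : ∀ ω, 0 < P ω) (hPsum : ∑ ω, P ω = 1)
    (ψ : Fin (q + 1) → EuclideanSpace ℝ (Fin r) → EuclideanSpace ℝ (Fin n) →
      EuclideanSpace ℝ (Fin m) → ℝ)
    (hψcont : ∀ k, Continuous fun p : EuclideanSpace ℝ (Fin r) × EuclideanSpace ℝ (Fin n) ×
      EuclideanSpace ℝ (Fin m) => ψ k p.1 p.2.1 p.2.2)
    (ψs : ℕ → Fin (q + 1) → EuclideanSpace ℝ (Fin r) → EuclideanSpace ℝ (Fin n) →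
      EuclideanSpace ℝ (Fin m) → ℝ)
    (hψscont : ∀ ν k, Continuous fun p : EuclideanSpace ℝ (Fin r) × EuclideanSpace ℝ (Fin n) ×
      EuclideanSpace ℝ (Fin m) => ψs ν k p.1 p.2.1 p.2.2)
    (C : Set (EuclideanSpace ℝ (Fin n) × EuclideanSpace ℝ (Fin m)))
    (hCne : C.Nonempty) (hCcl : IsClosed C)
    (hCbin : ∀ p ∈ C, ∀ i, p.2 i = 0 ∨ p.2 i = 1)
    (Ξ : Set (EuclideanSpace ℝ (Fin r))) (hΞcomp : IsCompact Ξ)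
    (ξbar : EuclideanSpace ℝ (Fin r)) (hξbar : ξbar ∈ Ξ)
    (ξs : ℕ → Ω → EuclideanSpace ℝ (Fin r)) (hξsΞ : ∀ ν ω, ξs ν ω ∈ Ξ)
    (hξsconv : ∀ ω, Tendsto (fun ν => ξs ν ω) atTop (nhds ξbar))
    (ℱ : Set (EuclideanSpace ℝ (Fin r) → EuclideanSpace ℝ (Fin n)))
    (𝒢 : Set (EuclideanSpace ℝ (Fin r) → EuclideanSpace ℝ (Fin m)))
    (hℱcont : ∀ F ∈ ℱ, ContinuousOn F Ξ) (h𝒢cont : ∀ G ∈ 𝒢, ContinuousOn G Ξ)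
    -- (a) risk measures: real-valued and continuous
    (R : Fin (q + 1) → (Ω → ℝ) → ℝ)
    (hRconst : ∀ k (c : ℝ), R k (fun _ => c) = c)
    (hRcont : ∀ k (η : Ω → ℝ) (ηs : ℕ → Ω → ℝ),
      (∀ ω, Tendsto (fun ν => ηs ν ω) atTop (nhds (η ω))) →
      Tendsto (fun ν => R k (ηs ν)) atTop (nhds (R k η)))
    (ε : ℝ) (hε : 0 < ε)
    (δ : EReal) (hδ : (ε : EReal) < δ)
    (δs : ℕ → EReal) (hδs : ∀ ν, (ε : EReal) < δs ν)
    (hδsconv : Tendsto δs atTop (nhds δ))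
    -- (b) approximating functions converge
    (hψapprox : ∀ (k : Fin (q + 1)) (ξ : EuclideanSpace ℝ (Fin r)), ξ ∈ Ξ →
      ∀ x y, (x, y) ∈ C →
      ∀ (ζ : ℕ → EuclideanSpace ℝ (Fin r)) (xs : ℕ → EuclideanSpace ℝ (Fin n)),
        (∀ ν, ζ ν ∈ Ξ) → (∀ ν, (xs ν, y) ∈ C) →
        Tendsto ζ atTop (nhds ξ) → Tendsto xs atTop (nhds x) →
        Tendsto (fun ν => ψs ν k (ζ ν) (xs ν) y) atTop (nhds (ψ k ξ x y)))
    -- (c) regularizers and their liminf-limit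
    (hs : ℕ → (EuclideanSpace ℝ (Fin r) → EuclideanSpace ℝ (Fin n)) →
      (EuclideanSpace ℝ (Fin r) → EuclideanSpace ℝ (Fin m)) → ℝ)
    (hhs_nonneg : ∀ ν F G, 0 ≤ hs ν F G)
    (h : (EuclideanSpace ℝ (Fin r) → EuclideanSpace ℝ (Fin n)) →
      (EuclideanSpace ℝ (Fin r) → EuclideanSpace ℝ (Fin m)) → ℝ)
    (hh_nonneg : ∀ F G, 0 ≤ h F G)
    (hh_liminf : ∀ (Fseq : ℕ → EuclideanSpace ℝ (Fin r) → EuclideanSpace ℝ (Fin n))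
      (Gseq : ℕ → EuclideanSpace ℝ (Fin r) → EuclideanSpace ℝ (Fin m))
      (F : EuclideanSpace ℝ (Fin r) → EuclideanSpace ℝ (Fin n))
      (G : EuclideanSpace ℝ (Fin r) → EuclideanSpace ℝ (Fin m)),
      TendstoUniformlyOn Fseq F atTop Ξ → TendstoUniformlyOn Gseq G atTop Ξ →
      ((h F G : ℝ) : EReal) ≤ atTop.liminf fun ν => ((hs ν (Fseq ν) (Gseq ν) : ℝ) : EReal))
    -- (d) (F̂^ν, Ĝ^ν) feasible for (TP)^ν with objective value at most γ^ν
    (Fhat : ℕ → EuclideanSpace ℝ (Fin r) → EuclideanSpace ℝ (Fin n))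
    (Ghat : ℕ → EuclideanSpace ℝ (Fin r) → EuclideanSpace ℝ (Fin m))
    (hhatfeas : ∀ ν, Fhat ν ∈ ℱ ∧ Ghat ν ∈ 𝒢 ∧
      (∀ k : Fin q, R k.succ (fun ω => ψs ν k.succ (ξs ν ω) (Fhat ν (ξs ν ω))
        (Heav (Ghat ν (ξs ν ω)))) ≤ 0) ∧
      (∀ ω, (Fhat ν (ξs ν ω), Heav (Ghat ν (ξs ν ω))) ∈ C) ∧
      (∀ ω, Ghat ν (ξs ν ω) ∈ Dset m ε (δs ν)))
    (γ : ℕ → ℝ)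
    (hγ : ∀ ν, R 0 (fun ω => ψs ν 0 (ξs ν ω) (Fhat ν (ξs ν ω))
      (Heav (Ghat ν (ξs ν ω)))) + hs ν (Fhat ν) (Ghat ν) ≤ γ ν)
    -- the subsequence and its uniform limit
    (N : ℕ → ℕ) (hN : StrictMono N)
    (Fstar : EuclideanSpace ℝ (Fin r) → EuclideanSpace ℝ (Fin n))
    (Gstar : EuclideanSpace ℝ (Fin r) → EuclideanSpace ℝ (Fin m))
    (hFstar : Fstar ∈ ℱ) (hGstar : Gstar ∈ 𝒢)
    (hFconv : TendstoUniformlyOn (fun j => Fhat (N j)) Fstar atTop Ξ)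
    (hGconv : TendstoUniformlyOn (fun j => Ghat (N j)) Gstar atTop Ξ)
    (hγliminf : (atTop.liminf fun j => ((γ (N j) : ℝ) : EReal)) < ⊤) :
    ((Fstar ξbar, Heav (Gstar ξbar)) ∈ C ∧
      (∀ k : Fin q, ψ k.succ ξbar (Fstar ξbar) (Heav (Gstar ξbar)) ≤ 0)) ∧
    (∃ J, ∀ j ≥ J, ∀ ω, Heav (Ghat (N j) (ξs (N j) ω)) = Heav (Gstar ξbar)) ∧
    Gstar ξbar ∈ Dset m ε δ ∧
    ((ψ 0 ξbar (Fstar ξbar) (Heav (Gstar ξbar)) + h Fstar Gstar : ℝ) : EReal) ≤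
      atTop.liminf fun j => ((γ (N j) : ℝ) : EReal) :=
  limiting_bound_general ψ ψs C hCcl Ξ ξbar hξbar ξs hξsΞ hξsconv ℱ 𝒢 hℱcont h𝒢cont R hRconst hRcont
    ε hε δ δs hδsconv hψapprox hs h hh_liminf Fhat Ghat hhatfeas γ hγ N hN Fstar Gstar hFstar hGstar
    hFconv hGconv
end

section
/- Decision rule guarantee for the minimum decision rule (MDR). Fix ν ∈ ℕ, suppose δ, δ^ν ∈ (ε,∞], τ^ν ∈ [0,∞), (F^ν,G^ν) is a τ^ν-minimizer of the training problem (TP)^ν without the risk constraints, and the following hold: (a) ℛ₀ is real-valued, monotone, and convex; (b) h^ν(F,G) = 0 whenever F and G are constant mappings; (c) there exist σ^ν, κ₀ ∈ [0,∞) with |ψ₀(ξ,x,y) − ψ₀(ξ',x,y)| ≤ κ₀‖ξ − ξ'‖₂ and |ψ₀^ν(ξ,x,y) − ψ₀(ξ,x,y)| ≤ σ^ν for all ξ,ξ' ∈ Ξ and (x,y) ∈ C; (d) ℱ and 𝒢 are closed under addition of constants and contain their zero mappings. Let ω^ν ∈ argmin_{ω∈Ω} ψ₀^ν(ξ^ν(ω),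 F^ν(ξ^ν(ω)), ℍ(G^ν(ξ^ν(ω)))) and set (x^ν,y^ν) = (F^ν(ξ^ν(ω^ν)), ℍ(G^ν(ξ^ν(ω^ν)))). Then for every ξ ∈ Ξ: (x^ν,y^ν) ∈ C, the infimum inf_{(x,y)∈C} ψ₀(ξ,x,y) is finite, and ψ₀(ξ, x^ν, y^ν) ≤ inf_{(x,y)∈C} ψ₀(ξ,x,y) + 2σ^ν + τ^ν + 2κ₀·diam Ξ. -/
open Filter Finset

/-!
Compare the decision at the best training point with an arbitrary feasible `(x, y) ∈ C`.
The constant rule `(F, G) ≡ (x, b)`, where `b` encodes the binary vector `y` by `±ε`, is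
feasible for the training problem and has zero regularization, so near-optimality of
`(Fν, Gν)` and monotonicity of `R0` bound the smallest training cost by the risk of `ψ0ν`
at `(x, y)` plus `τν`. Passing from `ψ0ν` to `ψ0` costs `σν` and moving from a training
point to `ξ` costs `κ0 · diam Ξ`; this is paid once on each side of the comparison.
-/

lemma exists_mem_Dset_Heav_eq {m : ℕ} {ε : ℝ} {δ : EReal} (hε : 0 < ε) (hεδ : (ε : EReal) ≤ δ)
    {y : EuclideanSpace ℝ (Fin m)} (hy : ∀ i, y i = 0 ∨ y i = 1) :
    ∃ g ∈ Dset m ε δ, Heav g = y := by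
  refine ⟨WithLp.toLp 2 fun i => if y i = 0 then -ε else ε, fun i => ?_, ?_⟩
  · have habs : |(if y i = 0 then -ε else ε)| = ε := by split_ifs <;> simp [hε.le]
    simpa [habs] using hεδ
  · ext i
    rcases hy i with h | h <;> simp [Heav, h, hε.le, hε.not_ge]

lemma const_mem_of_add_const_mem {α M : Type*} [AddZeroClass M] {S : Set (α → M)}
    (hzero : (fun _ => 0) ∈ S) (hadd : ∀ F ∈ S, ∀ a, (fun ζ => F ζ + a) ∈ S) (a : M) :
    (fun _ => a) ∈ S := by
  simpa using hadd _ hzero a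

lemma le_risk_of_forall_le {Ω : Type*} {R : (Ω → ℝ) → ℝ}
    (hconst : ∀ c : ℝ, R (fun _ => c) = c) (hmono : ∀ η η' : Ω → ℝ, (∀ ω, η ω ≤ η' ω) → R η ≤ R η')
    {c : ℝ} {η : Ω → ℝ} (h : ∀ ω, c ≤ η ω) : c ≤ R η :=
  hconst c ▸ hmono _ _ h

lemma risk_le_of_forall_le {Ω : Type*} {R : (Ω → ℝ) → ℝ}
    (hconst : ∀ c : ℝ, R (fun _ => c) = c) (hmono : ∀ η η' : Ω → ℝ, (∀ ω, η ω ≤ η' ω) → R η ≤ R η')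
    {c : ℝ} {η : Ω → ℝ} (h : ∀ ω, η ω ≤ c) : R η ≤ c :=
  hconst c ▸ hmono _ _ h

lemma abs_sub_le_add_mul_diam {X : Type*} [PseudoMetricSpace X] {s : Set X}
    (hs : Bornology.IsBounded s) {f g : X → ℝ} {σ κ : ℝ} (hκ : 0 ≤ κ)
    (hf : ∀ ζ ∈ s, ∀ ζ' ∈ s, |f ζ - f ζ'| ≤ κ * dist ζ ζ') (hg : ∀ ζ ∈ s, |g ζ - f ζ| ≤ σ)
    {ζ ζ' : X} (hζ : ζ ∈ s) (hζ' : ζ' ∈ s) :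
    |g ζ' - f ζ| ≤ σ + κ * Metric.diam s :=
  calc |g ζ' - f ζ| ≤ |g ζ' - f ζ'| + |f ζ' - f ζ| := abs_sub_le _ _ _
    _ ≤ σ + κ * dist ζ' ζ := add_le_add (hg ζ' hζ') (hf ζ' hζ' ζ hζ)
    _ ≤ σ + κ * Metric.diam s := by
      gcongr
      exact Metric.dist_le_diam_of_mem hs hζ' hζ

lemma bddBelow_and_le_csInf_add {S : Set ℝ} {a c : ℝ} (ha : a ∈ S) (h : ∀ v ∈ S, a ≤ v + c) :
    BddBelow S ∧ a ≤ sInf S + c := by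
  have hlb : a - c ∈ lowerBounds S := fun v hv => by linarith [h v hv]
  exact ⟨⟨_, hlb⟩, by linarith [le_csInf ⟨a, ha⟩ hlb]⟩

theorem MDR_guarantee_general
    {r n m : ℕ} {Ω : Type}
    (ψ0 ψ0ν : EuclideanSpace ℝ (Fin r) → EuclideanSpace ℝ (Fin n) →
      EuclideanSpace ℝ (Fin m) → ℝ)
    (C : Set (EuclideanSpace ℝ (Fin n) × EuclideanSpace ℝ (Fin m)))
    (hCbin : ∀ p ∈ C, ∀ i, p.2 i = 0 ∨ p.2 i = 1)
    (Ξ : Set (EuclideanSpace ℝ (Fin r))) (hΞcomp : IsCompact Ξ)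
    (ξν : Ω → EuclideanSpace ℝ (Fin r)) (hξν : ∀ ω, ξν ω ∈ Ξ)
    (ℱ : Set (EuclideanSpace ℝ (Fin r) → EuclideanSpace ℝ (Fin n)))
    (𝒢 : Set (EuclideanSpace ℝ (Fin r) → EuclideanSpace ℝ (Fin m)))
    -- (a) ℛ₀ real-valued, monotone, convex
    (R0 : (Ω → ℝ) → ℝ)
    (hR0const : ∀ c : ℝ, R0 (fun _ => c) = c)
    (hR0mono : ∀ η η' : Ω → ℝ, (∀ ω, η ω ≤ η' ω) → R0 η ≤ R0 η')
    -- (b) regularizer vanishes on constant mappings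
    (hν : (EuclideanSpace ℝ (Fin r) → EuclideanSpace ℝ (Fin n)) →
      (EuclideanSpace ℝ (Fin r) → EuclideanSpace ℝ (Fin m)) → ℝ)
    (hhν_nonneg : ∀ F G, 0 ≤ hν F G)
    (hhν_const : ∀ F G, (∀ ζ ∈ Ξ, ∀ ζ' ∈ Ξ, F ζ = F ζ') →
      (∀ ζ ∈ Ξ, ∀ ζ' ∈ Ξ, G ζ = G ζ') → hν F G = 0)
    (ε : ℝ) (hε : 0 < ε)
    (δν : EReal) (hδν : (ε : EReal) < δν)
    -- (c) Lipschitz and approximation bounds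
    (σν κ0 : ℝ) (hκ0 : 0 ≤ κ0)
    (hLip : ∀ x y, (x, y) ∈ C → ∀ ξ ∈ Ξ, ∀ ξ' ∈ Ξ,
      |ψ0 ξ x y - ψ0 ξ' x y| ≤ κ0 * dist ξ ξ')
    (happrox : ∀ x y, (x, y) ∈ C → ∀ ξ ∈ Ξ, |ψ0ν ξ x y - ψ0 ξ x y| ≤ σν)
    -- (d) translation closure and zero mappings
    (hshiftF : ∀ F ∈ ℱ, ∀ a : EuclideanSpace ℝ (Fin n), (fun ζ => F ζ + a) ∈ ℱ)
    (hshiftG : ∀ G ∈ 𝒢, ∀ b : EuclideanSpace ℝ (Fin m), (fun ζ => G ζ + b) ∈ 𝒢)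
    (hzeroF : (fun _ => (0 : EuclideanSpace ℝ (Fin n))) ∈ ℱ)
    (hzeroG : (fun _ => (0 : EuclideanSpace ℝ (Fin m))) ∈ 𝒢)
    -- (F^ν,G^ν) is a τ^ν-minimizer of (TP)^ν without risk constraints
    (τν : ℝ)
    (Fν : EuclideanSpace ℝ (Fin r) → EuclideanSpace ℝ (Fin n))
    (Gν : EuclideanSpace ℝ (Fin r) → EuclideanSpace ℝ (Fin m))
    (hνC : ∀ ω, (Fν (ξν ω), Heav (Gν (ξν ω))) ∈ C)
    (hnearmin : ∀ F ∈ ℱ, ∀ G ∈ 𝒢,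
      (∀ ω, (F (ξν ω), Heav (G (ξν ω))) ∈ C) →
      (∀ ω, G (ξν ω) ∈ Dset m ε δν) →
      R0 (fun ω => ψ0ν (ξν ω) (Fν (ξν ω)) (Heav (Gν (ξν ω)))) + hν Fν Gν ≤
        R0 (fun ω => ψ0ν (ξν ω) (F (ξν ω)) (Heav (G (ξν ω)))) + hν F G + τν)
    -- ω^ν attains the minimum over training points
    (ωgreedy : Ω)
    (hωgreedy : ∀ ω, ψ0ν (ξν ωgreedy) (Fν (ξν ωgreedy)) (Heav (Gν (ξν ωgreedy))) ≤
      ψ0ν (ξν ω) (Fν (ξν ω)) (Heav (Gν (ξν ω)))) :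
    ∀ ξ ∈ Ξ,
      (Fν (ξν ωgreedy), Heav (Gν (ξν ωgreedy))) ∈ C ∧
      BddBelow {v : ℝ | ∃ x y, (x, y) ∈ C ∧ v = ψ0 ξ x y} ∧
      ψ0 ξ (Fν (ξν ωgreedy)) (Heav (Gν (ξν ωgreedy))) ≤
        sInf {v : ℝ | ∃ x y, (x, y) ∈ C ∧ v = ψ0 ξ x y} +
          (2 * σν + τν + 2 * κ0 * Metric.diam Ξ) := by
  intro ξ hξ
  have hbest : (Fν (ξν ωgreedy), Heav (Gν (ξν ωgreedy))) ∈ C := hνC ωgreedy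
  have hΞ := hΞcomp.isBounded
  refine ⟨hbest, bddBelow_and_le_csInf_add ⟨_, _, hbest, rfl⟩ ?_⟩
  rintro _ ⟨x, y, hxy, rfl⟩
  obtain ⟨b, hbD, hHb⟩ := exists_mem_Dset_Heav_eq hε hδν.le (hCbin _ hxy)
  have hnear := hnearmin _ (const_mem_of_add_const_mem hzeroF hshiftF x)
    _ (const_mem_of_add_const_mem hzeroG hshiftG b) (fun _ => hHb ▸ hxy) (fun _ => hbD)
  rw [hhν_const (fun _ => x) (fun _ => b) (fun _ _ _ _ => rfl) (fun _ _ _ _ => rfl), hHb,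
    add_zero] at hnear
  have htrain : ψ0ν (ξν ωgreedy) (Fν (ξν ωgreedy)) (Heav (Gν (ξν ωgreedy))) ≤
      R0 (fun ω => ψ0ν (ξν ω) (Fν (ξν ω)) (Heav (Gν (ξν ω)))) + hν Fν Gν :=
    le_add_of_le_of_nonneg (le_risk_of_forall_le hR0const hR0mono hωgreedy) (hhν_nonneg _ _)
  have hrisk : R0 (fun ω => ψ0ν (ξν ω) x y) ≤ ψ0 ξ x y + (σν + κ0 * Metric.diam Ξ) :=
    risk_le_of_forall_le hR0const hR0mono fun ω => by
      linarith [abs_sub_le_iff.mp (abs_sub_le_add_mul_diam (g := fun ζ => ψ0ν ζ x y) hΞ hκ0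
        (hLip x y hxy) (happrox x y hxy) hξ (hξν ω))]
  have hbestξ := abs_sub_le_iff.mp (abs_sub_le_add_mul_diam hΞ hκ0 (hLip _ _ hbest)
    (happrox _ _ hbest) hξ (hξν ωgreedy))
  linarith

/-- Decision rule guarantee for the minimum decision rule (MDR): the constant
decision prescribed at the best training point is `(2σ^ν + τ^ν + 2κ₀·diam Ξ)`-suboptimal
for the actual problem uniformly over `ξ ∈ Ξ`. -/
theorem MDR_guarantee
    {r n m : ℕ} {Ω : Type} [Fintype Ω] [Nonempty Ω]
    (P : Ω → ℝ) (hP : ∀ ω, 0 < P ω) (hPsum : ∑ ω, P ω = 1)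
    (ψ0 ψ0ν : EuclideanSpace ℝ (Fin r) → EuclideanSpace ℝ (Fin n) →
      EuclideanSpace ℝ (Fin m) → ℝ)
    (hψ0cont : Continuous fun p : EuclideanSpace ℝ (Fin r) × EuclideanSpace ℝ (Fin n) ×
      EuclideanSpace ℝ (Fin m) => ψ0 p.1 p.2.1 p.2.2)
    (hψ0νcont : Continuous fun p : EuclideanSpace ℝ (Fin r) × EuclideanSpace ℝ (Fin n) ×
      EuclideanSpace ℝ (Fin m) => ψ0ν p.1 p.2.1 p.2.2)
    (C : Set (EuclideanSpace ℝ (Fin n) × EuclideanSpace ℝ (Fin m)))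
    (hCne : C.Nonempty) (hCcl : IsClosed C)
    (hCbin : ∀ p ∈ C, ∀ i, p.2 i = 0 ∨ p.2 i = 1)
    (Ξ : Set (EuclideanSpace ℝ (Fin r))) (hΞcomp : IsCompact Ξ)
    (ξν : Ω → EuclideanSpace ℝ (Fin r)) (hξν : ∀ ω, ξν ω ∈ Ξ)
    (ℱ : Set (EuclideanSpace ℝ (Fin r) → EuclideanSpace ℝ (Fin n)))
    (𝒢 : Set (EuclideanSpace ℝ (Fin r) → EuclideanSpace ℝ (Fin m)))
    (hℱcont : ∀ F ∈ ℱ, ContinuousOn F Ξ) (h𝒢cont : ∀ G ∈ 𝒢, ContinuousOn G Ξ)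
    -- (a) ℛ₀ real-valued, monotone, convex
    (R0 : (Ω → ℝ) → ℝ)
    (hR0const : ∀ c : ℝ, R0 (fun _ => c) = c)
    (hR0mono : ∀ η η' : Ω → ℝ, (∀ ω, η ω ≤ η' ω) → R0 η ≤ R0 η')
    (hR0convex : ∀ l : ℝ, 0 ≤ l → l ≤ 1 → ∀ η η' : Ω → ℝ,
      R0 (fun ω => (1 - l) * η ω + l * η' ω) ≤ (1 - l) * R0 η + l * R0 η')
    -- (b) regularizer vanishes on constant mappings
    (hν : (EuclideanSpace ℝ (Fin r) → EuclideanSpace ℝ (Fin n)) →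
      (EuclideanSpace ℝ (Fin r) → EuclideanSpace ℝ (Fin m)) → ℝ)
    (hhν_nonneg : ∀ F G, 0 ≤ hν F G)
    (hhν_const : ∀ F G, (∀ ζ ∈ Ξ, ∀ ζ' ∈ Ξ, F ζ = F ζ') →
      (∀ ζ ∈ Ξ, ∀ ζ' ∈ Ξ, G ζ = G ζ') → hν F G = 0)
    (ε : ℝ) (hε : 0 < ε)
    (δ δν : EReal) (hδ : (ε : EReal) < δ) (hδν : (ε : EReal) < δν)
    -- (c) Lipschitz and approximation bounds
    (σν κ0 : ℝ) (hσν : 0 ≤ σν) (hκ0 : 0 ≤ κ0)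
    (hLip : ∀ x y, (x, y) ∈ C → ∀ ξ ∈ Ξ, ∀ ξ' ∈ Ξ,
      |ψ0 ξ x y - ψ0 ξ' x y| ≤ κ0 * dist ξ ξ')
    (happrox : ∀ x y, (x, y) ∈ C → ∀ ξ ∈ Ξ, |ψ0ν ξ x y - ψ0 ξ x y| ≤ σν)
    -- (d) translation closure and zero mappings
    (hshiftF : ∀ F ∈ ℱ, ∀ a : EuclideanSpace ℝ (Fin n), (fun ζ => F ζ + a) ∈ ℱ)
    (hshiftG : ∀ G ∈ 𝒢, ∀ b : EuclideanSpace ℝ (Fin m), (fun ζ => G ζ + b) ∈ 𝒢)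
    (hzeroF : (fun _ => (0 : EuclideanSpace ℝ (Fin n))) ∈ ℱ)
    (hzeroG : (fun _ => (0 : EuclideanSpace ℝ (Fin m))) ∈ 𝒢)
    -- (F^ν,G^ν) is a τ^ν-minimizer of (TP)^ν without risk constraints
    (τν : ℝ) (hτν : 0 ≤ τν)
    (Fν : EuclideanSpace ℝ (Fin r) → EuclideanSpace ℝ (Fin n))
    (Gν : EuclideanSpace ℝ (Fin r) → EuclideanSpace ℝ (Fin m))
    (hFνmem : Fν ∈ ℱ) (hGνmem : Gν ∈ 𝒢)
    (hνC : ∀ ω, (Fν (ξν ω), Heav (Gν (ξν ω))) ∈ C)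
    (hνD : ∀ ω, Gν (ξν ω) ∈ Dset m ε δν)
    (hnearmin : ∀ F ∈ ℱ, ∀ G ∈ 𝒢,
      (∀ ω, (F (ξν ω), Heav (G (ξν ω))) ∈ C) →
      (∀ ω, G (ξν ω) ∈ Dset m ε δν) →
      R0 (fun ω => ψ0ν (ξν ω) (Fν (ξν ω)) (Heav (Gν (ξν ω)))) + hν Fν Gν ≤
        R0 (fun ω => ψ0ν (ξν ω) (F (ξν ω)) (Heav (G (ξν ω)))) + hν F G + τν)
    -- ω^ν attains the minimum over training points
    (ωgreedy : Ω)
    (hωgreedy : ∀ ω, ψ0ν (ξν ωgreedy) (Fν (ξν ωgreedy)) (Heav (Gν (ξν ωgreedy))) ≤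
      ψ0ν (ξν ω) (Fν (ξν ω)) (Heav (Gν (ξν ω)))) :
    ∀ ξ ∈ Ξ,
      (Fν (ξν ωgreedy), Heav (Gν (ξν ωgreedy))) ∈ C ∧
      BddBelow {v : ℝ | ∃ x y, (x, y) ∈ C ∧ v = ψ0 ξ x y} ∧
      ψ0 ξ (Fν (ξν ωgreedy)) (Heav (Gν (ξν ωgreedy))) ≤
        sInf {v : ℝ | ∃ x y, (x, y) ∈ C ∧ v = ψ0 ξ x y} +
          (2 * σν + τν + 2 * κ0 * Metric.diam Ξ) :=
  MDR_guarantee_general ψ0 ψ0ν C hCbin Ξ hΞcomp ξν hξν ℱ 𝒢 R0 hR0const hR0mono hν hhν_nonneg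
    hhν_const ε hε δν hδν σν κ0 hκ0 hLip happrox hshiftF hshiftG hzeroF hzeroG τν Fν Gν hνC hnearmin
    ωgreedy hωgreedy
end
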